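/- Converse SFR construction: let ξ : A → ℂ be a C² function on an open simply connected A ⊆ ℝ^4 satisfying the SFR equations ξ∇_{00'}ξ + ∇_{10'}ξ = 0 and ξ∇_{01'}ξ + ∇_{11'}ξ = 0. Define spinor fields by ξ^0 = ξ, ξ^1 = 1, η^{0'} = −∇_{01'}ξ, η^{1'} = ∇_{00'}ξ. Then the product field ξ^A η^{A'} satisfies ∇_{AA'} ξ^B η^{A'} = 0 and ∇_{AA'} ξ^A η^{B'} = 0; hence there exists locally a function f with ∇_{AA'} f = ξ_A η_{A'} which is a null solution of the wave equation. -/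

import Mathlib

open Matrix Complex

/-- Partial derivative `∂_a f`. -/
noncomputable def pd (a : Fin 4) (f : (Fin 4 → ℝ) → ℂ) (x : Fin 4 → ℝ) : ℂ :=
  fderiv ℝ f x (Pi.single a 1)

/-- The four spinor derivative operators: `spinD f x A A' = ∇_{AA'} f (x)`. -/
noncomputable def spinD (f : (Fin 4 → ℝ) → ℂ) (x : Fin 4 → ℝ) : Matrix (Fin 2) (Fin 2) ℂ :=
  (Real.sqrt 2 : ℂ)⁻¹ •
    !![pd 0 f x + pd 1 f x, pd 2 f x - Complex.I * pd 3 f x;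
       pd 2 f x + Complex.I * pd 3 f x, pd 0 f x - pd 1 f x]

/-- Index lowering by `ε`: `w_B = w^A ε_{AB} = (−w¹, w⁰)`. -/
def lower (w : Fin 2 → ℂ) : Fin 2 → ℂ := ![-w 1, w 0]

section helpers
variable {f g : (Fin 4 → ℝ) → ℂ} {x : Fin 4 → ℝ} {a : Fin 4} {A : Set (Fin 4 → ℝ)}

lemma pd_add (hf : DifferentiableAt ℝ f x) (hg : DifferentiableAt ℝ g x) (a : Fin 4) :
    pd a (fun y => f y + g y) x = pd a f x + pd a g x := by
  simp [pd, fderiv_fun_add hf hg]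

lemma pd_sub (hf : DifferentiableAt ℝ f x) (hg : DifferentiableAt ℝ g x) (a : Fin 4) :
    pd a (fun y => f y - g y) x = pd a f x - pd a g x := by
  simp [pd, fderiv_fun_sub hf hg]

lemma pd_neg (a : Fin 4) : pd a (fun y => -(f y)) x = -pd a f x := by
  simp [pd, fderiv_neg]

lemma pd_mul (hf : DifferentiableAt ℝ f x) (hg : DifferentiableAt ℝ g x) (a : Fin 4) :
    pd a (fun y => f y * g y) x = f x * pd a g x + g x * pd a f x := by
  simp [pd, fderiv_fun_mul hf hg, smul_eq_mul]

lemma pd_const_mul (hf : DifferentiableAt ℝ f x) (c : ℂ) (a : Fin 4) :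
    pd a (fun y => c * f y) x = c * pd a f x := by
  simp [pd, fderiv_const_mul hf c, smul_eq_mul]

lemma pd_congr {h : (Fin 4 → ℝ) → ℂ} (hfg : f =ᶠ[nhds x] h) (a : Fin 4) :
    pd a f x = pd a h x := by
  simp [pd, hfg.fderiv_eq]

lemma pd_zero_fun (a : Fin 4) : pd a (fun _ => (0:ℂ)) x = 0 := by
  simp [pd]

lemma pd_diffAt (h : ContDiffAt ℝ 2 f x) (b : Fin 4) : DifferentiableAt ℝ (pd b f) x := by
  have h1 : ContDiffAt ℝ 1 (fderiv ℝ f) x := h.fderiv_right (by norm_num)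
  have : pd b f = fun y => (ContinuousLinearMap.apply ℝ ℂ (Pi.single b (1:ℝ))) (fderiv ℝ f y) := rfl
  rw [this]
  exact ((ContinuousLinearMap.apply ℝ ℂ (Pi.single b (1:ℝ))).contDiff.contDiffAt.comp x h1).differentiableAt one_ne_zero

lemma pd_pd_eq (h : DifferentiableAt ℝ (fderiv ℝ f) x) (a b : Fin 4) :
    pd a (pd b f) x = fderiv ℝ (fderiv ℝ f) x (Pi.single a 1) (Pi.single b 1) := by
  have key := (ContinuousLinearMap.apply ℝ ℂ (Pi.single b (1:ℝ))).hasFDerivAt.comp x h.hasFDerivAt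
  have heq : pd b f = (ContinuousLinearMap.apply ℝ ℂ (Pi.single b (1:ℝ))) ∘ (fderiv ℝ f) := rfl
  rw [pd, heq, key.fderiv]
  rfl

lemma pd_symm (hA : IsOpen A) (hx : A ∈ nhds x) (h : ContDiffOn ℝ 2 f A) (a b : Fin 4) :
    pd a (pd b f) x = pd b (pd a f) x := by
  have hca : ContDiffAt ℝ 2 f x := h.contDiffAt hx
  have hd2 : DifferentiableAt ℝ (fderiv ℝ f) x :=
    (hca.fderiv_right (m := 1) (by norm_num)).differentiableAt one_ne_zero
  rw [pd_pd_eq hd2, pd_pd_eq hd2]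
  have hev : ∀ᶠ y in nhds x, HasFDerivAt f (fderiv ℝ f y) y := by
    filter_upwards [hx] with y hy
    exact ((h.contDiffAt (hA.mem_nhds hy)).differentiableAt two_ne_zero).hasFDerivAt
  exact second_derivative_symmetric_of_eventually hev hd2.hasFDerivAt _ _

lemma spinD_00 (f : (Fin 4 → ℝ) → ℂ) (x : Fin 4 → ℝ) :
    spinD f x 0 0 = (Real.sqrt 2 : ℂ)⁻¹ * (pd 0 f x + pd 1 f x) := by
  simp [spinD]

lemma spinD_01 (f : (Fin 4 → ℝ) → ℂ) (x : Fin 4 → ℝ) :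
    spinD f x 0 1 = (Real.sqrt 2 : ℂ)⁻¹ * (pd 2 f x - Complex.I * pd 3 f x) := by
  simp [spinD]

lemma spinD_10 (f : (Fin 4 → ℝ) → ℂ) (x : Fin 4 → ℝ) :
    spinD f x 1 0 = (Real.sqrt 2 : ℂ)⁻¹ * (pd 2 f x + Complex.I * pd 3 f x) := by
  simp [spinD]

lemma spinD_11 (f : (Fin 4 → ℝ) → ℂ) (x : Fin 4 → ℝ) :
    spinD f x 1 1 = (Real.sqrt 2 : ℂ)⁻¹ * (pd 0 f x - pd 1 f x) := by
  simp [spinD]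

end helpers

/-- Converse SFR construction: if a C² function `ξ` on an open simply connected `A ⊆ ℝ⁴`
satisfies the SFR equations, then setting `ξ^A = (ξ, 1)`, `η^{0'} = −∇_{01'}ξ`,
`η^{1'} = ∇_{00'}ξ`, the product field `ξ^A η^{A'}` satisfies `∇_{AA'} ξ^B η^{A'} = 0` and
`∇_{AA'} ξ^A η^{B'} = 0`, and hence there is a function `f` with `∇_{AA'}f = ξ_A η_{A'}` which
is a null solution of the wave equation. -/
theorem sfr_gives_null_solution
    (A : Set (Fin 4 → ℝ)) (hA : IsOpen A) (hsc : SimplyConnectedSpace A)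
    (ξ : (Fin 4 → ℝ) → ℂ) (hξ : ContDiffOn ℝ 2 ξ A)
    (sfr1 : ∀ x ∈ A, ξ x * spinD ξ x 0 0 + spinD ξ x 1 0 = 0)
    (sfr2 : ∀ x ∈ A, ξ x * spinD ξ x 0 1 + spinD ξ x 1 1 = 0) :
    (∀ x ∈ A, ∀ a b : Fin 2,
      ∑ a' : Fin 2,
        spinD (fun y => (![ξ y, 1] : Fin 2 → ℂ) b *
          (![-(spinD ξ y 0 1), spinD ξ y 0 0] : Fin 2 → ℂ) a') x a a' = 0) ∧
    (∀ x ∈ A, ∀ a' b' : Fin 2,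
      ∑ a : Fin 2,
        spinD (fun y => (![ξ y, 1] : Fin 2 → ℂ) a *
          (![-(spinD ξ y 0 1), spinD ξ y 0 0] : Fin 2 → ℂ) b') x a a' = 0) ∧
    ∃ f : (Fin 4 → ℝ) → ℂ, ContDiffOn ℝ 2 f A ∧
      (∀ x ∈ A, ∀ a b : Fin 2,
        spinD f x a b = lower (![ξ x, 1]) a *
          lower (![-(spinD ξ x 0 1), spinD ξ x 0 0]) b) ∧
      (∀ x ∈ A,
        (pd 0 f x) ^ 2 - (pd 1 f x) ^ 2 - (pd 2 f x) ^ 2 - (pd 3 f x) ^ 2 = 0) ∧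
      (∀ x ∈ A,
        pd 0 (pd 0 f) x - pd 1 (pd 1 f) x - pd 2 (pd 2 f) x - pd 3 (pd 3 f) x = 0) := by
  have hs2 : (Real.sqrt 2 : ℂ) ≠ 0 := by
    simp only [ne_eq, Complex.ofReal_eq_zero]
    positivity
  have hinv : (Real.sqrt 2 : ℂ) * (Real.sqrt 2 : ℂ)⁻¹ = 1 := mul_inv_cancel₀ hs2
  have hdξ : ∀ x ∈ A, DifferentiableAt ℝ ξ x := fun x hx =>
    (hξ.contDiffAt (hA.mem_nhds hx)).differentiableAt two_ne_zero
  have hd : ∀ x ∈ A, ∀ b, DifferentiableAt ℝ (pd b ξ) x := fun x hx =>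
    pd_diffAt (hξ.contDiffAt (hA.mem_nhds hx))
  have hsy : ∀ x ∈ A, ∀ a b, pd a (pd b ξ) x = pd b (pd a ξ) x := fun x hx =>
    pd_symm hA (hA.mem_nhds hx) hξ
  -- pointwise SFR equations with the √2 factor cleared
  have E1 : ∀ x ∈ A, ξ x * (pd 0 ξ x + pd 1 ξ x) + (pd 2 ξ x + Complex.I * pd 3 ξ x) = 0 := by
    intro x hx
    have h := sfr1 x hx
    rw [spinD_00, spinD_10] at h
    linear_combination (Real.sqrt 2 : ℂ) * h -
      (ξ x * (pd 0 ξ x + pd 1 ξ x) + (pd 2 ξ x + Complex.I * pd 3 ξ x)) * hinv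
  have E2 : ∀ x ∈ A, ξ x * (pd 2 ξ x - Complex.I * pd 3 ξ x) + (pd 0 ξ x - pd 1 ξ x) = 0 := by
    intro x hx
    have h := sfr2 x hx
    rw [spinD_01, spinD_11] at h
    linear_combination (Real.sqrt 2 : ℂ) * h -
      (ξ x * (pd 2 ξ x - Complex.I * pd 3 ξ x) + (pd 0 ξ x - pd 1 ξ x)) * hinv
  -- differentiated SFR equations
  have DE1 : ∀ x ∈ A, ∀ i : Fin 4,
      pd i ξ x * (pd 0 ξ x + pd 1 ξ x) + ξ x * (pd i (pd 0 ξ) x + pd i (pd 1 ξ) x)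
        + (pd i (pd 2 ξ) x + Complex.I * pd i (pd 3 ξ) x) = 0 := by
    intro x hx i
    have hev : (fun y => ξ y * (pd 0 ξ y + pd 1 ξ y) + (pd 2 ξ y + Complex.I * pd 3 ξ y))
        =ᶠ[nhds x] (fun _ => (0:ℂ)) :=
      Filter.eventuallyEq_of_mem (hA.mem_nhds hx) (fun y hy => E1 y hy)
    have h0 : pd i (fun y => ξ y * (pd 0 ξ y + pd 1 ξ y) + (pd 2 ξ y + Complex.I * pd 3 ξ y)) x
        = 0 := by rw [pd_congr hev]; exact pd_zero_fun i
    have hB : DifferentiableAt ℝ (fun y => pd 0 ξ y + pd 1 ξ y) x := (hd x hx 0).add (hd x hx 1)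
    have hC : DifferentiableAt ℝ (fun y => pd 2 ξ y + Complex.I * pd 3 ξ y) x :=
      (hd x hx 2).add ((hd x hx 3).const_mul _)
    rw [pd_add (f := fun y => ξ y * (pd 0 ξ y + pd 1 ξ y)) ((hdξ x hx).mul hB) hC, pd_mul (hdξ x hx) hB, pd_add (hd x hx 0) (hd x hx 1),
      pd_add (hd x hx 2) ((hd x hx 3).const_mul _), pd_const_mul (hd x hx 3)] at h0
    linear_combination h0
  have DE2 : ∀ x ∈ A, ∀ i : Fin 4,
      pd i ξ x * (pd 2 ξ x - Complex.I * pd 3 ξ x) + ξ x * (pd i (pd 2 ξ) x - Complex.I * pd i (pd 3 ξ) x)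
        + (pd i (pd 0 ξ) x - pd i (pd 1 ξ) x) = 0 := by
    intro x hx i
    have hev : (fun y => ξ y * (pd 2 ξ y - Complex.I * pd 3 ξ y) + (pd 0 ξ y - pd 1 ξ y))
        =ᶠ[nhds x] (fun _ => (0:ℂ)) :=
      Filter.eventuallyEq_of_mem (hA.mem_nhds hx) (fun y hy => E2 y hy)
    have h0 : pd i (fun y => ξ y * (pd 2 ξ y - Complex.I * pd 3 ξ y) + (pd 0 ξ y - pd 1 ξ y)) x
        = 0 := by rw [pd_congr hev]; exact pd_zero_fun i
    have hB : DifferentiableAt ℝ (fun y => pd 2 ξ y - Complex.I * pd 3 ξ y) x :=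
      (hd x hx 2).sub ((hd x hx 3).const_mul _)
    rw [pd_add (f := fun y => ξ y * (pd 2 ξ y - Complex.I * pd 3 ξ y))
        (g := fun y => pd 0 ξ y - pd 1 ξ y) ((hdξ x hx).mul hB) ((hd x hx 0).sub (hd x hx 1)), pd_mul (hdξ x hx) hB,
      pd_sub (hd x hx 2) ((hd x hx 3).const_mul _), pd_const_mul (hd x hx 3),
      pd_sub (hd x hx 0) (hd x hx 1)] at h0
    linear_combination h0
  -- derivatives of the two components of η and of ξ·η
  have hη0 : ∀ x ∈ A, ∀ i : Fin 4,
      pd i (fun y => -((Real.sqrt 2 : ℂ)⁻¹ * (pd 2 ξ y - Complex.I * pd 3 ξ y))) x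
        = -((Real.sqrt 2 : ℂ)⁻¹ * (pd i (pd 2 ξ) x - Complex.I * pd i (pd 3 ξ) x)) := by
    intro x hx i
    have hB : DifferentiableAt ℝ (fun y => pd 2 ξ y - Complex.I * pd 3 ξ y) x :=
      (hd x hx 2).sub ((hd x hx 3).const_mul _)
    rw [pd_neg, pd_const_mul hB, pd_sub (hd x hx 2) ((hd x hx 3).const_mul _),
      pd_const_mul (hd x hx 3)]
  have hη1 : ∀ x ∈ A, ∀ i : Fin 4,
      pd i (fun y => (Real.sqrt 2 : ℂ)⁻¹ * (pd 0 ξ y + pd 1 ξ y)) x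
        = (Real.sqrt 2 : ℂ)⁻¹ * (pd i (pd 0 ξ) x + pd i (pd 1 ξ) x) := by
    intro x hx i
    rw [pd_const_mul (f := fun y => pd 0 ξ y + pd 1 ξ y) ((hd x hx 0).add (hd x hx 1)), pd_add (hd x hx 0) (hd x hx 1)]
  have hF0 : ∀ x ∈ A, ∀ i : Fin 4,
      pd i (fun y => ξ y * -((Real.sqrt 2 : ℂ)⁻¹ * (pd 2 ξ y - Complex.I * pd 3 ξ y))) x
        = ξ x * -((Real.sqrt 2 : ℂ)⁻¹ * (pd i (pd 2 ξ) x - Complex.I * pd i (pd 3 ξ) x))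
          + -((Real.sqrt 2 : ℂ)⁻¹ * (pd 2 ξ x - Complex.I * pd 3 ξ x)) * pd i ξ x := by
    intro x hx i
    have hB : DifferentiableAt ℝ
        (fun y => -((Real.sqrt 2 : ℂ)⁻¹ * (pd 2 ξ y - Complex.I * pd 3 ξ y))) x :=
      (((hd x hx 2).sub ((hd x hx 3).const_mul _)).const_mul _).neg
    rw [pd_mul (hdξ x hx) hB, hη0 x hx i]
  have hF1 : ∀ x ∈ A, ∀ i : Fin 4,
      pd i (fun y => ξ y * ((Real.sqrt 2 : ℂ)⁻¹ * (pd 0 ξ y + pd 1 ξ y))) x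
        = ξ x * ((Real.sqrt 2 : ℂ)⁻¹ * (pd i (pd 0 ξ) x + pd i (pd 1 ξ) x))
          + (Real.sqrt 2 : ℂ)⁻¹ * (pd 0 ξ x + pd 1 ξ x) * pd i ξ x := by
    intro x hx i
    have hB : DifferentiableAt ℝ
        (fun y => (Real.sqrt 2 : ℂ)⁻¹ * (pd 0 ξ y + pd 1 ξ y)) x :=
      ((hd x hx 0).add (hd x hx 1)).const_mul _
    rw [pd_mul (hdξ x hx) hB, hη1 x hx i]
  refine ⟨?_, ?_, ξ, hξ, ?_, ?_, ?_⟩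
  · -- first claim: ∇_{AA'} (ξ^B η^{A'}) = 0
    intro x hx a b
    fin_cases a <;> fin_cases b <;>
      simp only [Fin.mk_zero, Fin.mk_one, Fin.sum_univ_two, Fin.isValue, Matrix.cons_val_zero,
        Matrix.cons_val_one, Matrix.head_cons, one_mul, spinD_00, spinD_01, spinD_10, spinD_11]
    · rw [hF0 x hx 0, hF0 x hx 1, hF1 x hx 2, hF1 x hx 3]
      linear_combination ((Real.sqrt 2:ℂ)⁻¹^2 * ξ x) *
          (hsy x hx 2 0 + hsy x hx 2 1) +
        ((Real.sqrt 2:ℂ)⁻¹^2 * Complex.I * ξ x) * (hsy x hx 0 3 + hsy x hx 1 3)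
    · rw [hη0 x hx 0, hη0 x hx 1, hη1 x hx 2, hη1 x hx 3]
      linear_combination ((Real.sqrt 2:ℂ)⁻¹^2) * (hsy x hx 2 0 + hsy x hx 2 1) +
        ((Real.sqrt 2:ℂ)⁻¹^2 * Complex.I) * (hsy x hx 0 3 + hsy x hx 1 3)
    · rw [hF0 x hx 2, hF0 x hx 3, hF1 x hx 0, hF1 x hx 1]
      linear_combination ((Real.sqrt 2:ℂ)⁻¹^2) *
        ((pd 0 ξ x + pd 1 ξ x) * E2 x hx - (pd 2 ξ x - Complex.I * pd 3 ξ x) * E1 x hx +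
          ξ x * (DE2 x hx 0 + DE2 x hx 1 - DE1 x hx 2 + Complex.I * DE1 x hx 3) +
          2 * ξ x * hsy x hx 0 1 + 2 * Complex.I * ξ x * hsy x hx 2 3 +
          ξ x^2 * (hsy x hx 2 0 + hsy x hx 2 1) +
          Complex.I * ξ x^2 * (hsy x hx 0 3 + hsy x hx 1 3))
    · rw [hη0 x hx 2, hη0 x hx 3, hη1 x hx 0, hη1 x hx 1]
      linear_combination ((Real.sqrt 2:ℂ)⁻¹^2) *
        (DE2 x hx 0 + DE2 x hx 1 - DE1 x hx 2 + Complex.I * DE1 x hx 3 +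
          2 * hsy x hx 0 1 + 2 * Complex.I * hsy x hx 2 3 +
          ξ x * (hsy x hx 2 0 + hsy x hx 2 1) +
          Complex.I * ξ x * (hsy x hx 0 3 + hsy x hx 1 3))
  · -- second claim: ∇_{AA'} (ξ^A η^{B'}) = 0
    intro x hx a' b'
    fin_cases a' <;> fin_cases b' <;>
      simp only [Fin.mk_zero, Fin.mk_one, Fin.sum_univ_two, Fin.isValue, Matrix.cons_val_zero,
        Matrix.cons_val_one, Matrix.head_cons, one_mul, spinD_00, spinD_01, spinD_10, spinD_11]
    · rw [hF0 x hx 0, hF0 x hx 1, hη0 x hx 2, hη0 x hx 3]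
      linear_combination ((Real.sqrt 2:ℂ)⁻¹^2) *
        (-DE1 x hx 2 + Complex.I * DE1 x hx 3 + ξ x * (hsy x hx 2 0 + hsy x hx 2 1) +
          Complex.I * ξ x * (hsy x hx 0 3 + hsy x hx 1 3) + 2 * Complex.I * hsy x hx 2 3)
    · rw [hF1 x hx 0, hF1 x hx 1, hη1 x hx 2, hη1 x hx 3]
      linear_combination ((Real.sqrt 2:ℂ)⁻¹^2) *
        (DE1 x hx 0 + DE1 x hx 1 + hsy x hx 2 0 + hsy x hx 2 1 +
          Complex.I * (hsy x hx 3 0 + hsy x hx 3 1))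
    · rw [hF0 x hx 2, hF0 x hx 3, hη0 x hx 0, hη0 x hx 1]
      linear_combination ((Real.sqrt 2:ℂ)⁻¹^2) *
        (-DE2 x hx 2 + Complex.I * DE2 x hx 3 + hsy x hx 2 0 - hsy x hx 2 1 +
          Complex.I * hsy x hx 0 3 - Complex.I * hsy x hx 1 3)
    · rw [hF1 x hx 2, hF1 x hx 3, hη1 x hx 0, hη1 x hx 1]
      linear_combination ((Real.sqrt 2:ℂ)⁻¹^2) *
        (DE2 x hx 0 + DE2 x hx 1 + ξ x * (hsy x hx 2 0 + hsy x hx 2 1) -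
          Complex.I * ξ x * (hsy x hx 3 0 + hsy x hx 3 1) + 2 * hsy x hx 0 1)
  · -- gradient identity for f = ξ
    intro x hx a b
    fin_cases a <;> fin_cases b <;>
      simp only [Fin.mk_zero, Fin.mk_one, Fin.isValue, lower, Matrix.cons_val_zero,
        Matrix.cons_val_one, Matrix.head_cons, spinD_00, spinD_01, spinD_10, spinD_11]
    · ring
    · ring
    · linear_combination (Real.sqrt 2:ℂ)⁻¹ * E1 x hx
    · linear_combination (Real.sqrt 2:ℂ)⁻¹ * E2 x hx
  · -- null condition
    intro x hx
    linear_combination (pd 0 ξ x + pd 1 ξ x) * E2 x hx -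
      (pd 2 ξ x - Complex.I * pd 3 ξ x) * E1 x hx - (pd 3 ξ x)^2 * Complex.I_sq
  · -- wave equation
    intro x hx
    linear_combination DE2 x hx 0 + DE2 x hx 1 - DE1 x hx 2 + Complex.I * DE1 x hx 3 +
      ξ x * (hsy x hx 2 0 + hsy x hx 2 1) +
      Complex.I * ξ x * (hsy x hx 0 3 + hsy x hx 1 3) + hsy x hx 0 1 +
      Complex.I * hsy x hx 2 3 - pd 3 (pd 3 ξ) x * Complex.I_sq
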